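/- Let f be analytic on a neighborhood of the closed unit disk, f(0)=0, and suppose Re(z f'(z)/f(z)) > 0 for all z with 0 < |z| < 1 (where z f'(z)/f(z) extends analytically to 0 with value equal to the order of vanishing of f at 0, assumed to be 1). Then f is injective on the open unit disk. -/

import Mathlib

/-!
Fix `w = f z₁ = f z₂`. From any `z₀` with `f z₀ = w`, lift the segment `v ↦ v * w`,
`v ∈ (0, 1]`, through `f` backwards from `z₀`. Along a lift `σ` we have `σ' = w / f'(σ)`, so
`d/dv |σ|² = (2/v) Re(f(σ) conj σ / f'(σ)) ≥ 0` by starlikeness: the lift stays in the compact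
disc `|z| ≤ |z₀|`, and can therefore be continued down to every `t > 0`. For small `t` the lifts
from `z₁` and from `z₂` both start close to `0`, where `f` is injective, so they agree there;
lifts through a local homeomorphism are unique, hence they agree at `1`, i.e. `z₁ = z₂`.
-/

open Complex Metric Set Filter Topology ComplexConjugate

def IsStarlike (f : ℂ → ℂ) : Prop :=
  ∀ z : ℂ, 0 < ‖z‖ → ‖z‖ < 1 → 0 < (z * deriv f z / f z).re

def IsRayLiftOn (f : ℂ → ℂ) (w : ℂ) (σ : ℝ → ℂ) (s : Set ℝ) : Prop :=
  ContinuousOn σ s ∧ MapsTo σ s (ball (0 : ℂ) 1) ∧ ∀ v ∈ s, f (σ v) = v * w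

theorem hasDerivAt_of_comp_eventuallyEq {𝕜 𝕜' : Type*} [NontriviallyNormedField 𝕜]
    [NontriviallyNormedField 𝕜'] [NormedAlgebra 𝕜 𝕜'] [CompleteSpace 𝕜']
    {f : 𝕜' → 𝕜'} {σ γ : 𝕜 → 𝕜'} {f' γ' : 𝕜'} {v : 𝕜}
    (hf : HasStrictDerivAt f f' (σ v)) (hf' : f' ≠ 0) (hσ : ContinuousAt σ v)
    (hγ : HasDerivAt γ γ' v) (hfσ : f ∘ σ =ᶠ[𝓝 v] γ) :
    HasDerivAt σ (f'⁻¹ * γ') v := by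
  have hσ_eq : σ =ᶠ[𝓝 v] hf.localInverse f f' (σ v) hf' ∘ γ := by
    filter_upwards [hσ.eventually (hf.eventually_left_inverse hf'), hfσ] with x hx hfx
    rw [Function.comp_apply, ← hfx, Function.comp_apply, hx]
  have hinv := (hf.to_localInverse hf').hasDerivAt
  rw [show f (σ v) = γ v from hfσ.eq_of_nhds] at hinv
  exact (hinv.comp v hγ).congr_of_eventuallyEq hσ_eq

theorem HasStrictDerivAt.exists_mem_nhds_injOn {𝕜 : Type*} [NontriviallyNormedField 𝕜]
    [CompleteSpace 𝕜] {f : 𝕜 → 𝕜} {f' a : 𝕜} (hf : HasStrictDerivAt f f' a) (hf' : f' ≠ 0) :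
    ∃ U ∈ 𝓝 a, InjOn f U := by
  let e := (hf.hasStrictFDerivAt_equiv hf').toOpenPartialHomeomorph f
  exact ⟨e.source, e.open_source.mem_nhds (HasStrictFDerivAt.mem_toOpenPartialHomeomorph_source _),
    e.injOn⟩

theorem isLocallyInjective_domRestrict_of_deriv_ne_zero {f : ℂ → ℂ} {s : Set ℂ} (hs : IsOpen s)
    (hf : DifferentiableOn ℂ f s) (hf' : ∀ z ∈ s, deriv f z ≠ 0) :
    IsLocallyInjective (s.domRestrict f) := by
  refine isLocallyInjective_iff_nhds.2 fun z => ?_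
  obtain ⟨U, hU, hinj⟩ :=
    (hf.analyticAt (hs.mem_nhds z.2)).hasStrictDerivAt.exists_mem_nhds_injOn (hf' z z.2)
  exact ⟨Subtype.val ⁻¹' U, continuous_subtype_val.continuousAt.preimage_mem_nhds hU,
    fun x hx y hy h => Subtype.ext (hinj hx hy h)⟩

namespace IsStarlike

variable {f : ℂ → ℂ} {z : ℂ}

theorem apply_ne_zero (hst : IsStarlike f) (hz : z ∈ ball (0 : ℂ) 1) (hz0 : z ≠ 0) :
    f z ≠ 0 := by
  intro h
  simpa [h] using hst z (norm_pos_iff.2 hz0) (mem_ball_zero_iff.1 hz)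

theorem deriv_ne_zero (hst : IsStarlike f) (hf'0 : deriv f 0 ≠ 0) (hz : z ∈ ball (0 : ℂ) 1) :
    deriv f z ≠ 0 := by
  rcases eq_or_ne z 0 with rfl | hz0
  · exact hf'0
  · intro h
    simpa [h] using hst z (norm_pos_iff.2 hz0) (mem_ball_zero_iff.1 hz)

theorem re_apply_mul_conj_div_deriv_nonneg (hst : IsStarlike f) (hz : z ∈ ball (0 : ℂ) 1) :
    0 ≤ (f z * conj z / deriv f z).re := by
  rcases eq_or_ne z 0 with rfl | hz0
  · simp
  have key : f z * conj z / deriv f z = (normSq z : ℂ) * (z * deriv f z / f z)⁻¹ := by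
    rw [← mul_conj, inv_div]
    field_simp
  rw [key, re_ofReal_mul, inv_re]
  exact mul_nonneg (normSq_nonneg z)
    (div_nonneg (hst z (norm_pos_iff.2 hz0) (mem_ball_zero_iff.1 hz)).le (normSq_nonneg _))

theorem exists_norm_lt_of_norm_apply_lt (hst : IsStarlike f) (hf : ContinuousOn f (ball 0 1))
    {r ε : ℝ} (hr : r < 1) (hε : 0 < ε) :
    ∃ δ > 0, ∀ z : ℂ, ‖z‖ ≤ r → ‖f z‖ < δ → ‖z‖ < ε := by
  set K := closedBall (0 : ℂ) r \ ball 0 ε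
  have hK : K ⊆ ball 0 1 := fun z hz =>
    mem_ball_zero_iff.2 ((mem_closedBall_zero_iff.1 hz.1).trans_lt hr)
  have hfK : ∀ z ∈ K, f z ≠ 0 := fun z hz =>
    hst.apply_ne_zero (hK hz) fun h => hz.2 (h ▸ mem_ball_self hε)
  obtain ⟨C, hC⟩ := ((isCompact_closedBall 0 r).diff isOpen_ball).exists_bound_of_continuousOn
    ((hf.mono hK).inv₀ hfK)
  refine ⟨(max C 1)⁻¹, by positivity, fun z hzr hfz => ?_⟩
  by_contra hzε
  have hzK : z ∈ K := ⟨mem_closedBall_zero_iff.2 hzr, fun h => hzε (mem_ball_zero_iff.1 h)⟩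
  have hCz : ‖f z‖⁻¹ ≤ max C 1 := (norm_inv (f z) ▸ hC z hzK).trans (le_max_left _ _)
  rw [inv_le_comm₀ (norm_pos_iff.2 (hfK z hzK)) (by positivity)] at hCz
  linarith

end IsStarlike

namespace IsRayLiftOn

variable {f : ℂ → ℂ} {w : ℂ} {σ τ g : ℝ → ℂ} {s t : Set ℝ}

theorem mono (hσ : IsRayLiftOn f w σ s) (hts : t ⊆ s) : IsRayLiftOn f w σ t :=
  ⟨hσ.1.mono hts, hσ.2.1.mono_left hts, fun v hv => hσ.2.2 v (hts hv)⟩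

theorem union (hσ : IsRayLiftOn f w σ s) (hτ : IsRayLiftOn f w τ t) (hs : IsClosed s)
    (ht : IsClosed t) (hgσ : EqOn g σ s) (hgτ : EqOn g τ t) : IsRayLiftOn f w g (s ∪ t) := by
  refine ⟨(hσ.1.congr hgσ).union_of_isClosed (hτ.1.congr hgτ) hs ht, ?_, ?_⟩
  · rintro v (hv | hv)
    · exact hgσ hv ▸ hσ.2.1 hv
    · exact hgτ hv ▸ hτ.2.1 hv
  · rintro v (hv | hv)
    · rw [hgσ hv]; exact hσ.2.2 v hv
    · rw [hgτ hv]; exact hτ.2.2 v hv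

theorem hasDerivAt (hf : DifferentiableOn ℂ f (ball 0 1))
    (hf' : ∀ z ∈ ball (0 : ℂ) 1, deriv f z ≠ 0) (hσ : IsRayLiftOn f w σ s) {v : ℝ}
    (hv : s ∈ 𝓝 v) :
    HasDerivAt σ ((deriv f (σ v))⁻¹ * w) v := by
  have hσv : σ v ∈ ball (0 : ℂ) 1 := hσ.2.1 (mem_of_mem_nhds hv)
  have hγ : HasDerivAt (fun u : ℝ => (u : ℂ) * w) w v := by
    simpa using (hasDerivAt_id v).ofReal_comp.mul_const w
  refine hasDerivAt_of_comp_eventuallyEq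
    (hf.analyticAt (isOpen_ball.mem_nhds hσv)).hasStrictDerivAt (hf' _ hσv)
    (hσ.1.continuousAt hv) hγ ?_
  filter_upwards [hv] with u hu using hσ.2.2 u hu

theorem monotoneOn_norm (hf : DifferentiableOn ℂ f (ball 0 1))
    (hf' : ∀ z ∈ ball (0 : ℂ) 1, deriv f z ≠ 0) (hst : IsStarlike f) {t : ℝ} (ht : 0 < t)
    (hσ : IsRayLiftOn f w σ (Icc t 1)) : MonotoneOn (fun v => ‖σ v‖) (Icc t 1) := by
  have hsq : MonotoneOn (fun v => ‖σ v‖ ^ 2) (Icc t 1) := by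
    refine monotoneOn_of_hasDerivWithinAt_nonneg (convex_Icc t 1)
      (f' := fun v => 2 * inner ℝ (σ v) ((deriv f (σ v))⁻¹ * w))
      ((continuous_norm.comp_continuousOn hσ.1).pow 2) (fun v hv => ?_) (fun v hv => ?_) <;>
      rw [interior_Icc] at hv
    · exact (hσ.hasDerivAt hf hf' (Icc_mem_nhds hv.1 hv.2)).norm_sq.hasDerivWithinAt
    · have hvI : v ∈ Icc t 1 := Ioo_subset_Icc_self hv
      have hv0 : (v : ℂ) ≠ 0 := ofReal_ne_zero.2 (ht.trans hv.1).ne'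
      have hw : w = f (σ v) / v := by rw [hσ.2.2 v hvI]; field_simp
      have key : (deriv f (σ v))⁻¹ * w * conj (σ v)
          = ((v⁻¹ : ℝ) : ℂ) * (f (σ v) * conj (σ v) / deriv f (σ v)) := by
        rw [hw]; push_cast; ring
      rw [Complex.inner, key, re_ofReal_mul]
      exact mul_nonneg zero_le_two (mul_nonneg (inv_nonneg.2 (ht.trans hv.1).le)
        (hst.re_apply_mul_conj_div_deriv_nonneg (hσ.2.1 hvI)))
  exact fun a ha b hb hab =>
    (pow_le_pow_iff_left₀ (norm_nonneg _) (norm_nonneg _) two_ne_zero).1 (hsq ha hb hab)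

theorem norm_le_norm_one (hf : DifferentiableOn ℂ f (ball 0 1))
    (hf' : ∀ z ∈ ball (0 : ℂ) 1, deriv f z ≠ 0) (hst : IsStarlike f) {t v : ℝ} (ht : 0 < t)
    (hσ : IsRayLiftOn f w σ (Icc t 1)) (hv : v ∈ Icc t 1) : ‖σ v‖ ≤ ‖σ 1‖ :=
  hσ.monotoneOn_norm hf hf' hst ht hv ⟨hv.1.trans hv.2, le_rfl⟩ hv.2

theorem eqOn (hf : DifferentiableOn ℂ f (ball 0 1))
    (hf' : ∀ z ∈ ball (0 : ℂ) 1, deriv f z ≠ 0) (hσ : IsRayLiftOn f w σ s)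
    (hτ : IsRayLiftOn f w τ s) (hs : IsPreconnected s) {a : ℝ} (ha : a ∈ s)
    (hστ : σ a = τ a) : EqOn σ τ s := by
  have : PreconnectedSpace s := isPreconnected_iff_preconnectedSpace.1 hs
  have h := (T2Space.isSeparatedMap ((ball (0 : ℂ) 1).domRestrict f)).eq_of_comp_eq
    (isLocallyInjective_domRestrict_of_deriv_ne_zero isOpen_ball hf hf')
    (hσ.1.mapsToRestrict hσ.2.1) (hτ.1.mapsToRestrict hτ.2.1)
    (funext fun v => by simp [hσ.2.2 v v.2, hτ.2.2 v v.2]) ⟨a, ha⟩ (Subtype.ext hστ)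
  exact fun v hv => congrArg Subtype.val (congrFun h ⟨v, hv⟩)

theorem exists_extend (hf : DifferentiableOn ℂ f (ball 0 1))
    (hf' : ∀ z ∈ ball (0 : ℂ) 1, deriv f z ≠ 0) {zs : ℂ} {s : ℝ} (hzs : zs ∈ ball (0 : ℂ) 1)
    (hfzs : f zs = s * w) :
    ∃ η > 0, ∃ N ∈ 𝓝 zs, ∀ (t : ℝ) (σ : ℝ → ℂ), IsRayLiftOn f w σ (Icc t 1) → t ≤ 1 →
      |t - s| < η → σ t ∈ N → ∀ t' ∈ Ioc (s - η) t,
        ∃ τ : ℝ → ℂ, IsRayLiftOn f w τ (Icc t' 1) ∧ τ 1 = σ 1 := by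
  let e := ((hf.analyticAt (isOpen_ball.mem_nhds hzs)).hasStrictDerivAt.hasStrictFDerivAt_equiv
    (hf' zs hzs)).toOpenPartialHomeomorph f
  have hzs_src : zs ∈ e.source := HasStrictFDerivAt.mem_toOpenPartialHomeomorph_source _
  let Ψ : ℝ → ℂ := fun v => e.symm (v * w)
  have hγ : Continuous fun v : ℝ => (v : ℂ) * w := by fun_prop
  have hΨ_left : ∀ (v : ℝ) (z : ℂ), z ∈ e.source → f z = v * w → Ψ v = z := fun v z hz hfz => by
    simp only [Ψ, ← hfz]; exact e.left_inv hz
  have htgt : (s : ℂ) * w ∈ e.target := hfzs ▸ e.map_source hzs_src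
  have hev : ∀ᶠ v : ℝ in 𝓝 s, (v : ℂ) * w ∈ e.target ∧ Ψ v ∈ ball (0 : ℂ) 1 := by
    have hΨ : ContinuousAt Ψ s := (e.continuousAt_symm htgt).comp (x := s) hγ.continuousAt
    refine (hγ.continuousAt.eventually_mem (e.open_target.mem_nhds htgt)).and
      (hΨ.eventually_mem (isOpen_ball.mem_nhds ?_))
    rwa [hΨ_left s zs hzs_src hfzs]
  obtain ⟨η, hη, hηev⟩ := Metric.eventually_nhds_iff.1 hev
  refine ⟨η, hη, e.source, e.open_source.mem_nhds hzs_src, fun t σ hσ ht1 hts hσt t' ht' => ?_⟩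
  have hsub : Icc t' t ⊆ ball s η := fun v hv => by
    rw [Real.ball_eq_Ioo]
    constructor <;> linarith [ht'.1, hv.1, hv.2, (abs_lt.1 hts).2]
  have hΨ : IsRayLiftOn f w Ψ (Icc t' t) :=
    ⟨e.continuousOn_symm.comp hγ.continuousOn fun v hv => (hηev (hsub hv)).1,
      fun v hv => (hηev (hsub hv)).2, fun v hv => e.right_inv (hηev (hsub hv)).1⟩
  have hΨt : Ψ t = σ t := hΨ_left t (σ t) hσt (hσ.2.2 t ⟨le_rfl, ht1⟩)
  let τ : ℝ → ℂ := fun v => if v ≤ t then Ψ v else σ v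
  have hτσ : EqOn τ σ (Icc t 1) := fun v hv => by
    by_cases hvt : v ≤ t
    · simp only [τ, le_antisymm hvt hv.1, hΨt, ite_self]
    · simp only [τ, if_neg hvt]
  have hτ := hΨ.union hσ isClosed_Icc isClosed_Icc (fun v hv => if_pos hv.2) hτσ
  rw [Icc_union_Icc_eq_Icc ht'.2 ht1] at hτ
  exact ⟨τ, hτ, hτσ ⟨ht1, le_rfl⟩⟩

end IsRayLiftOn

theorem exists_isRayLiftOn {f : ℂ → ℂ} (hst : IsStarlike f) (hf : DifferentiableOn ℂ f (ball 0 1))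
    (hf' : ∀ z ∈ ball (0 : ℂ) 1, deriv f z ≠ 0) {z₀ : ℂ} (hz₀ : z₀ ∈ ball (0 : ℂ) 1) {t : ℝ}
    (ht : t ∈ Ioc (0 : ℝ) 1) : ∃ σ : ℝ → ℂ, IsRayLiftOn f (f z₀) σ (Icc t 1) ∧ σ 1 = z₀ := by
  -- If `sInf B > 0`, the endpoints of lifts over `[b, 1]`, `b ∈ B`, `b → sInf B`, accumulate in
  -- the compact disc `‖z‖ ≤ ‖z₀‖`, and the local inverse of `f` there continues them below `sInf B`.
  by_contra hne
  set B := {b ∈ Ioc (0 : ℝ) 1 | ∃ σ : ℝ → ℂ, IsRayLiftOn f (f z₀) σ (Icc b 1) ∧ σ 1 = z₀}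
  have hB1 : (1 : ℝ) ∈ B := ⟨⟨one_pos, le_rfl⟩, fun _ => z₀,
    ⟨continuousOn_const, fun _ _ => hz₀, fun v hv => by simp [le_antisymm hv.2 hv.1]⟩, rfl⟩
  have hBbdd : BddBelow B := ⟨0, fun b hb => hb.1.1.le⟩
  have hts : t ≤ sInf B := le_csInf ⟨1, hB1⟩ fun b ⟨_, σ, hσ, hσ1⟩ =>
    le_of_not_ge fun hbt => hne ⟨σ, hσ.mono (Icc_subset_Icc_left hbt), hσ1⟩
  obtain ⟨u, -, hu, huB⟩ := exists_seq_tendsto_sInf ⟨1, hB1⟩ hBbdd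
  choose σ hσ hσ1 using fun n => (huB n).2
  have hσu : ∀ n, σ n (u n) ∈ closedBall (0 : ℂ) ‖z₀‖ := fun n => mem_closedBall_zero_iff.2 <|
    hσ1 n ▸ (hσ n).norm_le_norm_one hf hf' hst (huB n).1.1 ⟨le_rfl, (huB n).1.2⟩
  obtain ⟨zs, hzs, φ, hφ, hlim⟩ := (isCompact_closedBall _ _).tendsto_subseq hσu
  have hzs_ball : zs ∈ ball (0 : ℂ) 1 :=
    mem_ball_zero_iff.2 ((mem_closedBall_zero_iff.1 hzs).trans_lt (mem_ball_zero_iff.1 hz₀))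
  have huφ := hu.comp hφ.tendsto_atTop
  have hfzs : f zs = sInf B * f z₀ := by
    refine tendsto_nhds_unique
      ((hf.continuousOn.continuousAt (isOpen_ball.mem_nhds hzs_ball)).tendsto.comp hlim) ?_
    simp only [Function.comp_def, fun n => (hσ n).2.2 (u n) ⟨le_rfl, (huB n).1.2⟩]
    exact ((continuous_ofReal.tendsto _).comp huφ).mul_const _
  obtain ⟨η, hη, N, hN, hext⟩ := IsRayLiftOn.exists_extend hf hf' hzs_ball hfzs
  obtain ⟨k, hk, hkN⟩ :=
    ((huφ.eventually (Metric.ball_mem_nhds _ hη)).and (hlim.eventually hN)).exists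
  set t' := max (sInf B - η / 2) (sInf B / 2)
  have ht's : t' < sInf B := max_lt (by linarith) (by linarith [ht.1])
  obtain ⟨τ, hτ, hτ1⟩ := hext (u (φ k)) (σ (φ k)) (hσ _) (huB _).1.2 (abs_lt.2 (abs_lt.1 hk))
    hkN t' ⟨lt_max_of_lt_left (by linarith), ht's.le.trans (csInf_le hBbdd (huB _))⟩
  have ht'B : t' ∈ B := ⟨⟨lt_max_of_lt_right (by linarith [ht.1]),
    by linarith [csInf_le hBbdd hB1]⟩, τ, hτ, hτ1.trans (hσ1 _)⟩
  linarith [csInf_le hBbdd ht'B]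

theorem IsStarlike.injOn {f : ℂ → ℂ} (hst : IsStarlike f)
    (hf : DifferentiableOn ℂ f (ball 0 1)) (hf'0 : deriv f 0 ≠ 0) : InjOn f (ball (0 : ℂ) 1) := by
  intro z₁ hz₁ z₂ hz₂ h
  have hf' : ∀ z ∈ ball (0 : ℂ) 1, deriv f z ≠ 0 := fun z hz => hst.deriv_ne_zero hf'0 hz
  obtain ⟨U, hU, hinj⟩ := (hf.analyticAt (isOpen_ball.mem_nhds (mem_ball_self one_pos))
    ).hasStrictDerivAt.exists_mem_nhds_injOn hf'0
  obtain ⟨ε, hε, hεU⟩ := Metric.mem_nhds_iff.1 hU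
  set r := max ‖z₁‖ ‖z₂‖
  obtain ⟨δ, hδ, hsmall⟩ := hst.exists_norm_lt_of_norm_apply_lt hf.continuousOn
    (max_lt (mem_ball_zero_iff.1 hz₁) (mem_ball_zero_iff.1 hz₂)) hε
  obtain ⟨c, hc, hcw⟩ := exists_pos_mul_lt hδ ‖f z₁‖
  set t := min 1 c
  have ht : t ∈ Ioc (0 : ℝ) 1 := ⟨lt_min one_pos hc, min_le_left _ _⟩
  have htI : t ∈ Icc t 1 := ⟨le_rfl, ht.2⟩
  have hstart : ∀ σ : ℝ → ℂ, IsRayLiftOn f (f z₁) σ (Icc t 1) → ‖σ 1‖ ≤ r → σ t ∈ U := by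
    refine fun σ hσ hσ1 => hεU (mem_ball_zero_iff.2 (hsmall _
      ((hσ.norm_le_norm_one hf hf' hst ht.1 htI).trans hσ1) ?_))
    rw [hσ.2.2 t htI, norm_mul, norm_real, Real.norm_of_nonneg ht.1.le, mul_comm]
    exact (mul_le_mul_of_nonneg_left (min_le_right _ _) (norm_nonneg _)).trans_lt hcw
  obtain ⟨σ, hσ, hσ1⟩ := exists_isRayLiftOn hst hf hf' hz₁ ht
  obtain ⟨τ, hτ, hτ1⟩ := exists_isRayLiftOn hst hf hf' hz₂ ht
  rw [← h] at hτ
  have hστ : σ t = τ t := hinj (hstart σ hσ (hσ1 ▸ le_max_left _ _))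
    (hstart τ hτ (hτ1 ▸ le_max_right _ _)) (by rw [hσ.2.2 t htI, hτ.2.2 t htI])
  rw [← hσ1, ← hτ1]
  exact hσ.eqOn hf hf' hτ isPreconnected_Icc htI hστ ⟨ht.2, le_rfl⟩

theorem stmt14_general (f : ℂ → ℂ) (U : Set ℂ)
    (hUD : closedBall (0:ℂ) 1 ⊆ U)
    (hf : DifferentiableOn ℂ f U)
    (hf'0 : deriv f 0 = 1)
    (hst : ∀ z : ℂ, 0 < ‖z‖ → ‖z‖ < 1 →
      0 < (z * deriv f z / f z).re) :
    Set.InjOn f (ball (0:ℂ) 1) :=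
  IsStarlike.injOn hst (hf.mono (ball_subset_closedBall.trans hUD)) (hf'0 ▸ one_ne_zero)

/-- a starlike function is univalent: if `f` is analytic on a
neighborhood of the closed unit disk, `f(0) = 0`, `f'(0) = 1`, and
`Re(z f'(z)/f(z)) > 0` for `0 < |z| < 1`, then `f` is injective on the
open unit disk. -/
theorem stmt14 (f : ℂ → ℂ) (U : Set ℂ) (hU : IsOpen U)
    (hUD : closedBall (0:ℂ) 1 ⊆ U)
    (hf : DifferentiableOn ℂ f U)
    (hf0 : f 0 = 0) (hf'0 : deriv f 0 = 1)
    (hst : ∀ z : ℂ, 0 < ‖z‖ → ‖z‖ < 1 →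
      0 < (z * deriv f z / f z).re) :
    Set.InjOn f (ball (0:ℂ) 1) :=
  stmt14_general f U hUD hf hf'0 hst
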